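/- arXiv:2102.11564 — 5 statements merged into one kernel-verified Lean document; each statement's English description precedes it below -/
import Mathlib

section
/- Let P be the cubic Hermite interpolant on [x_i, x_{i+1}] of the data (f_i, ḟ_i), (f_{i+1}, ḟ_{i+1}). If P is monotone nondecreasing on [x_i, x_{i+1}], then m_i ≥ 0, ḟ_i ≥ 0 and ḟ_{i+1} ≥ 0; symmetrically, if P is monotone nonincreasing on [x_i, x_{i+1}], then m_i ≤ 0, ḟ_i ≤ 0 and ḟ_{i+1} ≤ 0 (so ḟ_i, ḟ_{i+1} and m_i all have the same sign). Moreover, if m_i = 0, then P is monotone on [x_i, x_{i+1}] if and only if ḟ_i = ḟ_{i+1} = 0, in which case P is constant on [x_i, x_{i+1}]. -/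
/-- The cubic Hermite interpolant on `[xi, xip]` of the data
`(fi, di)`, `(fip, dip)` (values and derivatives at the endpoints). -/
noncomputable def hermite (xi xip fi fip di dip : ℝ) : ℝ → ℝ := fun t =>
  fi + di * (t - xi)
    + (((fip - fi) / (xip - xi) - di) / (xip - xi)) * (t - xi) ^ 2
    + ((dip + di - 2 * ((fip - fi) / (xip - xi))) / (xip - xi) ^ 2)
        * (t - xi) ^ 2 * (t - xip)

/-! A monotone function has nonnegative one-sided derivatives at the ends of its interval of
monotonicity, and the interpolant has derivatives `ḟ_i`, `ḟ_{i+1}` there. If moreover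
`m_i = 0`, i.e. `f_i = f_{i+1}`, a monotone (or antitone) interpolant is squeezed between its
equal endpoint values, hence constant, hence both monotone and antitone, which forces
`ḟ_i = ḟ_{i+1} = 0`. -/

open Set

section Monotone

variable {α β : Type*} [Preorder α] [PartialOrder β] {f : α → β} {a b x : α}

lemma MonotoneOn.apply_eq_of_apply_eq (hf : MonotoneOn f (Icc a b)) (hab : f a = f b)
    (hx : x ∈ Icc a b) : f x = f a :=
  le_antisymm (hab ▸ hf hx (right_mem_Icc.2 (hx.1.trans hx.2)) hx.2)
    (hf (left_mem_Icc.2 (hx.1.trans hx.2)) hx hx.1)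

lemma MonotoneOn.antitoneOn_of_apply_eq (hf : MonotoneOn f (Icc a b)) (hab : f a = f b) :
    AntitoneOn f (Icc a b) := fun x hx y hy _ => by
  rw [hf.apply_eq_of_apply_eq hab hx, hf.apply_eq_of_apply_eq hab hy]

lemma AntitoneOn.monotoneOn_of_apply_eq (hf : AntitoneOn f (Icc a b)) (hab : f a = f b) :
    MonotoneOn f (Icc a b) :=
  hf.dual_right.antitoneOn_of_apply_eq hab

end Monotone

lemma HasDerivAt.nonneg_of_monotoneOn_Icc {f : ℝ → ℝ} {f' a b x : ℝ} (hab : a < b)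
    (hx : x ∈ Icc a b) (hf : HasDerivAt f f' x) (hmono : MonotoneOn f (Icc a b)) : 0 ≤ f' :=
  hf.hasDerivWithinAt.nonneg_of_monotoneOn (uniqueDiffOn_Icc hab x hx).accPt hmono

lemma HasDerivAt.nonpos_of_antitoneOn_Icc {f : ℝ → ℝ} {f' a b x : ℝ} (hab : a < b)
    (hx : x ∈ Icc a b) (hf : HasDerivAt f f' x) (hanti : AntitoneOn f (Icc a b)) : f' ≤ 0 :=
  hf.hasDerivWithinAt.nonpos_of_antitoneOn (uniqueDiffOn_Icc hab x hx).accPt hanti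

section Hermite

variable {xi xip fi fip di dip : ℝ}

lemma hermite_apply_left : hermite xi xip fi fip di dip xi = fi := by
  simp [hermite]

lemma hermite_apply_right (hx : xi ≠ xip) : hermite xi xip fi fip di dip xip = fip := by
  have : xip - xi ≠ 0 := sub_ne_zero.2 hx.symm
  simp only [hermite]
  field_simp
  ring

lemma hasDerivAt_hermite (t : ℝ) :
    HasDerivAt (hermite xi xip fi fip di dip)
      (di + 2 * (((fip - fi) / (xip - xi) - di) / (xip - xi)) * (t - xi)
        + ((dip + di - 2 * ((fip - fi) / (xip - xi))) / (xip - xi) ^ 2)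
          * (2 * (t - xi) * (t - xip) + (t - xi) ^ 2)) t := by
  have hlin : HasDerivAt (fun s => s - xi) 1 t := (hasDerivAt_id' t).sub_const xi
  have hsq := hlin.fun_pow 2
  exact ((((hlin.const_mul di).const_add fi).add (hsq.const_mul _)).add
    ((hsq.const_mul _).mul ((hasDerivAt_id' t).sub_const xip))).congr_deriv (by ring)

lemma hasDerivAt_hermite_left : HasDerivAt (hermite xi xip fi fip di dip) di xi := by
  convert hasDerivAt_hermite xi using 1
  simp

lemma hasDerivAt_hermite_right (hx : xi ≠ xip) :
    HasDerivAt (hermite xi xip fi fip di dip) dip xip := by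
  have : xip - xi ≠ 0 := sub_ne_zero.2 hx.symm
  convert hasDerivAt_hermite xip using 1
  field_simp
  ring

lemma hermite_nonneg_of_monotoneOn (hx : xi < xip)
    (hmono : MonotoneOn (hermite xi xip fi fip di dip) (Icc xi xip)) :
    0 ≤ (fip - fi) / (xip - xi) ∧ 0 ≤ di ∧ 0 ≤ dip := by
  have hle := hmono (left_mem_Icc.2 hx.le) (right_mem_Icc.2 hx.le) hx.le
  rw [hermite_apply_left, hermite_apply_right hx.ne] at hle
  exact ⟨div_nonneg (sub_nonneg.2 hle) (sub_nonneg.2 hx.le),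
    hasDerivAt_hermite_left.nonneg_of_monotoneOn_Icc hx (left_mem_Icc.2 hx.le) hmono,
    (hasDerivAt_hermite_right hx.ne).nonneg_of_monotoneOn_Icc hx (right_mem_Icc.2 hx.le) hmono⟩

lemma hermite_nonpos_of_antitoneOn (hx : xi < xip)
    (hanti : AntitoneOn (hermite xi xip fi fip di dip) (Icc xi xip)) :
    (fip - fi) / (xip - xi) ≤ 0 ∧ di ≤ 0 ∧ dip ≤ 0 := by
  have hle := hanti (left_mem_Icc.2 hx.le) (right_mem_Icc.2 hx.le) hx.le
  rw [hermite_apply_left, hermite_apply_right hx.ne] at hle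
  exact ⟨div_nonpos_of_nonpos_of_nonneg (sub_nonpos.2 hle) (sub_nonneg.2 hx.le),
    hasDerivAt_hermite_left.nonpos_of_antitoneOn_Icc hx (left_mem_Icc.2 hx.le) hanti,
    (hasDerivAt_hermite_right hx.ne).nonpos_of_antitoneOn_Icc hx (right_mem_Icc.2 hx.le) hanti⟩

lemma hermite_eq_const (hm : (fip - fi) / (xip - xi) = 0) :
    hermite xi xip fi fip 0 0 = fun _ => fi := by
  ext t
  simp [hermite, hm]

end Hermite

/-- Necessary conditions for monotonicity of a cubic Hermite interpolant. -/
theorem hermite_monotone_necessary (xi xip fi fip di dip : ℝ) (hx : xi < xip) :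
    (MonotoneOn (hermite xi xip fi fip di dip) (Set.Icc xi xip) →
      0 ≤ (fip - fi) / (xip - xi) ∧ 0 ≤ di ∧ 0 ≤ dip) ∧
    (AntitoneOn (hermite xi xip fi fip di dip) (Set.Icc xi xip) →
      (fip - fi) / (xip - xi) ≤ 0 ∧ di ≤ 0 ∧ dip ≤ 0) ∧
    ((fip - fi) / (xip - xi) = 0 →
      ((MonotoneOn (hermite xi xip fi fip di dip) (Set.Icc xi xip) ∨
          AntitoneOn (hermite xi xip fi fip di dip) (Set.Icc xi xip)) ↔
        (di = 0 ∧ dip = 0)) ∧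
      (di = 0 → dip = 0 →
        ∀ t ∈ Set.Icc xi xip, hermite xi xip fi fip di dip t = fi)) := by
  refine ⟨hermite_nonneg_of_monotoneOn hx, hermite_nonpos_of_antitoneOn hx,
    fun hm => ⟨⟨?_, ?_⟩, ?_⟩⟩
  · have hends : hermite xi xip fi fip di dip xi = hermite xi xip fi fip di dip xip := by
      rw [hermite_apply_left, hermite_apply_right hx.ne, eq_comm, ← sub_eq_zero]
      exact (div_eq_zero_iff.1 hm).resolve_right (sub_ne_zero.2 hx.ne')
    intro hmono_or_anti
    obtain ⟨hmono, hanti⟩ : MonotoneOn (hermite xi xip fi fip di dip) (Icc xi xip) ∧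
        AntitoneOn (hermite xi xip fi fip di dip) (Icc xi xip) :=
      hmono_or_anti.elim (fun h => ⟨h, h.antitoneOn_of_apply_eq hends⟩)
        (fun h => ⟨h.monotoneOn_of_apply_eq hends, h⟩)
    obtain ⟨-, hdi, hdip⟩ := hermite_nonneg_of_monotoneOn hx hmono
    obtain ⟨-, hdi', hdip'⟩ := hermite_nonpos_of_antitoneOn hx hanti
    exact ⟨le_antisymm hdi' hdi, le_antisymm hdip' hdip⟩
  · rintro ⟨rfl, rfl⟩
    exact Or.inl (hermite_eq_const hm ▸ monotoneOn_const)
  · rintro rfl rfl t -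
    rw [hermite_eq_const hm]
end

section
/- Let x_1 < x_2 < … < x_n, let f_1, …, f_n be nondecreasing data in the sense that m_i = (f_{i+1} − f_i)/(x_{i+1} − x_i) ≥ 0 for all 1 ≤ i ≤ n−1, and let ḟ_2, …, ḟ_{n−1} satisfy 0 ≤ ḟ_i ≤ 3·min(m_{i−1}, m_i) for all 2 ≤ i ≤ n−1. Then for every 2 ≤ i ≤ n−2 the cubic Hermite interpolant on [x_i, x_{i+1}] of the data (f_i, ḟ_i), (f_{i+1}, ḟ_{i+1}) is nondecreasing on [x_i, x_{i+1}]. -/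
open Set

theorem hermite_hasDerivAt {xi xip : ℝ} (fi fip di dip t : ℝ) (hx : xi ≠ xip) :
    HasDerivAt (hermite xi xip fi fip di dip)
      ((di * (xip - t) ^ 2 + dip * (t - xi) ^ 2
        + (6 * ((fip - fi) / (xip - xi)) - 2 * di - 2 * dip) * (t - xi) * (xip - t))
        / (xip - xi) ^ 2) t := by
  have hu : HasDerivAt (fun s : ℝ => s - xi) 1 t := (hasDerivAt_id t).sub_const xi
  have hu2 : HasDerivAt (fun s : ℝ => (s - xi) ^ 2) (2 * (t - xi)) t := by
    simpa using hu.fun_pow 2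
  have hv : HasDerivAt (fun s : ℝ => s - xip) 1 t := (hasDerivAt_id t).sub_const xip
  refine ((((hu.const_mul di).const_add fi).add (hu2.const_mul _)).add
    ((hu2.const_mul _).mul hv)).congr_deriv ?_
  have hh : xip - xi ≠ 0 := sub_ne_zero.2 hx.symm
  field_simp
  ring

lemma fritschCarlson_quadratic_nonneg {m a b u v : ℝ} (ha : 0 ≤ a) (ha3 : a ≤ 3 * m)
    (hb : 0 ≤ b) (hb3 : b ≤ 3 * m) (hu : 0 ≤ u) (hv : 0 ≤ v) :
    0 ≤ a * v ^ 2 + b * u ^ 2 + (6 * m - 2 * a - 2 * b) * u * v := by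
  rcases (show 0 ≤ m by linarith).eq_or_lt with rfl | hm
  · obtain rfl : a = 0 := by linarith
    obtain rfl : b = 0 := by linarith
    simp
  have key : 3 * m * (a * v ^ 2 + b * u ^ 2 + (6 * m - 2 * a - 2 * b) * u * v) =
      (3 * m - a) * (3 * m - b) * (2 * u * v) + a * (3 * m - b) * v ^ 2
        + (3 * m - a) * b * u ^ 2 + a * b * (u - v) ^ 2 := by ring
  have h3a : 0 ≤ 3 * m - a := by linarith
  have h3b : 0 ≤ 3 * m - b := by linarith
  rw [← mul_nonneg_iff_of_pos_left (by positivity : (0 : ℝ) < 3 * m), key]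
  positivity

theorem hermite_monotoneOn {xi xip fi fip di dip : ℝ} (hx : xi < xip)
    (hdi : 0 ≤ di) (hdi3 : di ≤ 3 * ((fip - fi) / (xip - xi)))
    (hdip : 0 ≤ dip) (hdip3 : dip ≤ 3 * ((fip - fi) / (xip - xi))) :
    MonotoneOn (hermite xi xip fi fip di dip) (Icc xi xip) := by
  have hderiv := fun t => hermite_hasDerivAt fi fip di dip t hx.ne
  refine monotoneOn_of_hasDerivWithinAt_nonneg (convex_Icc xi xip)
    (HasDerivAt.continuousOn fun t _ => hderiv t)
    (fun t _ => (hderiv t).hasDerivWithinAt) fun t ht => ?_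
  rw [interior_Icc] at ht
  have := fritschCarlson_quadratic_nonneg hdi hdi3 hdip hdip3
    (sub_nonneg.2 ht.1.le) (sub_nonneg.2 ht.2.le)
  positivity

theorem hermite_monotone_global_general (n : ℕ) (x f df : ℕ → ℝ)
    (hx : ∀ i, 1 ≤ i → i ≤ n - 1 → x i < x (i + 1))
    (hdf : ∀ i, 2 ≤ i → i ≤ n - 1 →
      0 ≤ df i ∧ df i ≤ 3 * min ((f i - f (i - 1)) / (x i - x (i - 1)))
        ((f (i + 1) - f i) / (x (i + 1) - x i))) :
    ∀ i, 2 ≤ i → i ≤ n - 2 →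
      MonotoneOn (hermite (x i) (x (i + 1)) (f i) (f (i + 1)) (df i) (df (i + 1)))
        (Set.Icc (x i) (x (i + 1))) := by
  intro i hi hin
  obtain ⟨hdi, hdi3⟩ := hdf i hi (by omega)
  obtain ⟨hdip, hdip3⟩ := hdf (i + 1) (by omega) (by omega)
  rw [Nat.add_sub_cancel] at hdip3
  exact hermite_monotoneOn (hx i (by omega) (by omega))
    hdi (hdi3.trans (by gcongr; exact min_le_right _ _))
    hdip (hdip3.trans (by gcongr; exact min_le_left _ _))

/-- Global sufficient condition for monotonicity: if the data are nondecreasing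
and `0 ≤ ḟᵢ ≤ 3·min(mᵢ₋₁, mᵢ)` for `2 ≤ i ≤ n−1`, then the cubic Hermite
interpolant is nondecreasing on each `[xᵢ, xᵢ₊₁]` for `2 ≤ i ≤ n−2`. -/
theorem hermite_monotone_global (n : ℕ) (x f df : ℕ → ℝ) (hn : 4 ≤ n)
    (hx : ∀ i, 1 ≤ i → i ≤ n - 1 → x i < x (i + 1))
    (hmono : ∀ i, 1 ≤ i → i ≤ n - 1 → 0 ≤ (f (i + 1) - f i) / (x (i + 1) - x i))
    (hdf : ∀ i, 2 ≤ i → i ≤ n - 1 →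
      0 ≤ df i ∧ df i ≤ 3 * min ((f i - f (i - 1)) / (x i - x (i - 1)))
        ((f (i + 1) - f i) / (x (i + 1) - x i))) :
    ∀ i, 2 ≤ i → i ≤ n - 2 →
      MonotoneOn (hermite (x i) (x (i + 1)) (f i) (f (i + 1)) (df i) (df (i + 1)))
        (Set.Icc (x i) (x (i + 1))) :=
  hermite_monotone_global_general n x f df hx hdf
end

section
/- Let f be four times continuously differentiable on [x_1, x_n] with |f⁽⁴⁾(x)| ≤ L for all x ∈ [x_1, x_n], and suppose there exists K > 0 such that ĥ/h_j ≤ K for all 1 ≤ j ≤ n−1. For 2 ≤ i ≤ n−1 define R(i) = 3·λ_{i−1}·m_{i−1} + 3·μ_{i−1}·m_i − λ_{i−1}·f'(x_{i−1}) − 2·f'(x_i) − μ_{i−1}·f'(x_{i+1}). Then for every 2 ≤ i ≤ n−1, |R(i)| ≤ ((17K + K²)/16 + 1)·L·ĥ³. -/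
/-- Mesh spacing `hᵢ = xᵢ₊₁ − xᵢ`. -/
noncomputable def hstep (x : ℕ → ℝ) (i : ℕ) : ℝ := x (i + 1) - x i

/-- Divided difference `mᵢ = (f(xᵢ₊₁) − f(xᵢ))/hᵢ`. -/
noncomputable def mslope (x : ℕ → ℝ) (f : ℝ → ℝ) (i : ℕ) : ℝ :=
  (f (x (i + 1)) - f (x i)) / (x (i + 1) - x i)

/-- `λᵢ = hᵢ₊₁/(hᵢ + hᵢ₊₁)`. -/
noncomputable def lamb (x : ℕ → ℝ) (i : ℕ) : ℝ :=
  hstep x (i + 1) / (hstep x i + hstep x (i + 1))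

/-- `μᵢ = hᵢ/(hᵢ + hᵢ₊₁)`. -/
noncomputable def mub (x : ℕ → ℝ) (i : ℕ) : ℝ :=
  hstep x i / (hstep x i + hstep x (i + 1))

/-!
Expand `f` to third order and `f'` to second order about the middle node `c = xᵢ`, with
Lagrange remainders `E`, `e` bounded by `L |t|⁴ / 24` and `L |t|³ / 6`, `t = x - c`. Then the
one-sided residual `3 (f x - f c) / t - f' x - 2 f' c` equals `f'' c · t / 2 + 3 E / t - e`,
so it lies within `7/24 · L |t|³` of `f'' c · t / 2`. The residual `R(i)` is the `λ, μ`-weighted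
mean of the one-sided residuals at `xᵢ₋₁` and `xᵢ₊₁`, and `λ (xᵢ₋₁ - c) + μ (xᵢ₊₁ - c) = 0`
cancels the second-derivative terms: `|R(i)| ≤ 7/24 · L ĥ³`, and `7/24 ≤ (17K + K²)/16 + 1`
for `K > 0`.
-/

open Set Nat

theorem iteratedDerivWithin_subset {𝕜 F : Type*} [NontriviallyNormedField 𝕜]
    [NormedAddCommGroup F] [NormedSpace 𝕜 F] {f : 𝕜 → F} {s t : Set 𝕜} {n : ℕ} {x : 𝕜}
    (st : s ⊆ t) (hs : UniqueDiffOn 𝕜 s) (ht : UniqueDiffOn 𝕜 t) (hf : ContDiffOn 𝕜 n f t)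
    (hx : x ∈ s) :
    iteratedDerivWithin n f s x = iteratedDerivWithin n f t x := by
  simp only [iteratedDerivWithin_eq_iteratedFDerivWithin,
    iteratedFDerivWithin_subset st hs ht hf hx]

theorem taylorWithinEval_subset {E : Type*} [NormedAddCommGroup E] [NormedSpace ℝ E]
    {f : ℝ → E} {s t : Set ℝ} {n : ℕ} {x₀ : ℝ} (st : s ⊆ t) (hs : UniqueDiffOn ℝ s)
    (ht : UniqueDiffOn ℝ t) (hf : ContDiffOn ℝ n f t) (hx₀ : x₀ ∈ s) (x : ℝ) :
    taylorWithinEval f n s x₀ x = taylorWithinEval f n t x₀ x := by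
  simp only [taylor_within_apply]
  refine Finset.sum_congr rfl fun k hk => ?_
  have hkn : (k : WithTop ℕ∞) ≤ n := by exact_mod_cast Finset.mem_range_succ_iff.1 hk
  rw [iteratedDerivWithin_subset st hs ht (hf.of_le hkn) hx₀]

theorem abs_sub_taylorWithinEval_le {f : ℝ → ℝ} {s : Set ℝ} (hs : s.OrdConnected)
    (hsu : UniqueDiffOn ℝ s) {n : ℕ} (hf : ContDiffOn ℝ (n + 1) f s) {C : ℝ}
    (hC : ∀ y ∈ s, |iteratedDerivWithin (n + 1) f s y| ≤ C) {x₀ x : ℝ} (hx₀ : x₀ ∈ s)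
    (hx : x ∈ s) :
    |f x - taylorWithinEval f n s x₀ x| ≤ C * |x - x₀| ^ (n + 1) / (n + 1)! := by
  rcases eq_or_ne x₀ x with rfl | hne
  · simp
  have hsub : uIcc x₀ x ⊆ s := hs.uIcc_subset hx₀ hx
  have hu : UniqueDiffOn ℝ (uIcc x₀ x) := uniqueDiffOn_uIcc hne
  have hfu : ContDiffOn ℝ (n + 1) f (uIcc x₀ x) := hf.mono hsub
  obtain ⟨ξ, hξ, heq⟩ := taylor_mean_remainder_lagrange (n := n) hne hfu.of_succ
    ((hfu.differentiableOn_iteratedDerivWithin (by norm_cast; omega) hu).mono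
      uIoo_subset_uIcc_self)
  rw [taylorWithinEval_subset hsub hu hsu hf.of_succ left_mem_uIcc,
    iteratedDerivWithin_subset hsub hu hsu (mod_cast hf) (uIoo_subset_uIcc_self hξ)] at heq
  rw [heq, abs_div, abs_mul, abs_pow, Nat.abs_cast]
  gcongr
  exact hC ξ (hsub (uIoo_subset_uIcc_self hξ))

theorem abs_local_residual_le {f : ℝ → ℝ} {s : Set ℝ} (hs : s.OrdConnected)
    (hsu : UniqueDiffOn ℝ s) (hf : ContDiffOn ℝ 4 f s) {L : ℝ}
    (hL : ∀ y ∈ s, |iteratedDerivWithin 4 f s y| ≤ L) {c x : ℝ} (hc : c ∈ s) (hx : x ∈ s)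
    (hxc : x ≠ c) :
    |3 * ((f x - f c) / (x - c)) - derivWithin f s x - 2 * derivWithin f s c
        - iteratedDerivWithin 2 f s c * (x - c) / 2| ≤ 7 / 24 * L * |x - c| ^ 3 := by
  set g := derivWithin f s
  have hg : ContDiffOn ℝ (2 + 1) g s := hf.derivWithin hsu (by norm_num)
  have hgL : ∀ y ∈ s, |iteratedDerivWithin (2 + 1) g s y| ≤ L := by
    simpa only [g, ← iteratedDerivWithin_succ'] using hL
  have hg2 : derivWithin g s c = iteratedDerivWithin 2 f s c := by
    rw [iteratedDerivWithin_succ', iteratedDerivWithin_one]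
  have hg3 : iteratedDerivWithin 2 g s c = iteratedDerivWithin 3 f s c :=
    congrFun iteratedDerivWithin_succ'.symm c
  have hfT := abs_sub_taylorWithinEval_le hs hsu hf hL hc hx (n := 3)
  have hgT := abs_sub_taylorWithinEval_le hs hsu hg hgL hc hx
  simp only [taylor_within_apply, Finset.sum_range_succ, Finset.sum_range_zero,
    iteratedDerivWithin_zero, iteratedDerivWithin_one, hg2, hg3, smul_eq_mul] at hfT hgT
  norm_num [Nat.factorial] at hfT hgT
  set t := x - c
  set E := f x - (f c + t * g c + 1 / 2 * t ^ 2 * iteratedDerivWithin 2 f s c +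
    1 / 6 * t ^ 3 * iteratedDerivWithin 3 f s c)
  set e := g x - (g c + t * iteratedDerivWithin 2 f s c +
    1 / 2 * t ^ 2 * iteratedDerivWithin 3 f s c)
  have ht₀ : t ≠ 0 := sub_ne_zero.2 hxc
  have ht : 0 < |t| := abs_pos.2 ht₀
  have hsplit : 3 * ((f x - f c) / t) - g x - 2 * g c - iteratedDerivWithin 2 f s c * t / 2
      = 3 * E / t - e := by
    simp only [E, e]; field_simp; ring
  rw [hsplit]
  calc |3 * E / t - e| ≤ 3 * |E| / |t| + |e| := by
        simpa [abs_div, abs_mul] using abs_sub (3 * E / t) e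
    _ ≤ 3 * (L * |t| ^ 4 / 24) / |t| + L * |t| ^ 3 / 6 := by gcongr
    _ = 7 / 24 * L * |t| ^ 3 := by field_simp; ring

theorem abs_weighted_residual_le {a c b h C D Fa Fc Fb Ga Gc Gb : ℝ} (hac : a < c) (hcb : c < b)
    (hca : c - a ≤ h) (hbc : b - c ≤ h) (hC : 0 ≤ C)
    (ha : |3 * ((Fa - Fc) / (a - c)) - Ga - 2 * Gc - D * (a - c) / 2| ≤ C * |a - c| ^ 3)
    (hb : |3 * ((Fb - Fc) / (b - c)) - Gb - 2 * Gc - D * (b - c) / 2| ≤ C * |b - c| ^ 3) :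
    |3 * ((b - c) / (c - a + (b - c))) * ((Fc - Fa) / (c - a))
        + 3 * ((c - a) / (c - a + (b - c))) * ((Fb - Fc) / (b - c))
        - (b - c) / (c - a + (b - c)) * Ga - 2 * Gc - (c - a) / (c - a + (b - c)) * Gb|
      ≤ C * h ^ 3 := by
  set ρa := 3 * ((Fa - Fc) / (a - c)) - Ga - 2 * Gc - D * (a - c) / 2
  set ρb := 3 * ((Fb - Fc) / (b - c)) - Gb - 2 * Gc - D * (b - c) / 2
  have hca₀ : 0 < c - a := sub_pos.2 hac
  have hbc₀ : 0 < b - c := sub_pos.2 hcb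
  have hsplit : 3 * ((b - c) / (c - a + (b - c))) * ((Fc - Fa) / (c - a))
        + 3 * ((c - a) / (c - a + (b - c))) * ((Fb - Fc) / (b - c))
        - (b - c) / (c - a + (b - c)) * Ga - 2 * Gc - (c - a) / (c - a + (b - c)) * Gb
      = (b - c) / (c - a + (b - c)) * ρa + (c - a) / (c - a + (b - c)) * ρb := by
    have : a - c ≠ 0 := by linarith
    simp only [ρa, ρb]; field_simp; ring
  have hha : C * |a - c| ^ 3 ≤ C * h ^ 3 := by
    rw [abs_sub_comm, abs_of_pos hca₀]; gcongr
  have hhb : C * |b - c| ^ 3 ≤ C * h ^ 3 := by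
    rw [abs_of_pos hbc₀]; gcongr
  rw [hsplit]
  calc _ ≤ (b - c) / (c - a + (b - c)) * |ρa| + (c - a) / (c - a + (b - c)) * |ρb| := by
        refine (abs_add_le _ _).trans ?_
        rw [abs_mul, abs_mul, abs_of_pos (div_pos hbc₀ (by linarith)),
          abs_of_pos (div_pos hca₀ (by linarith))]
    _ ≤ (b - c) / (c - a + (b - c)) * (C * h ^ 3)
          + (c - a) / (c - a + (b - c)) * (C * h ^ 3) := by
        gcongr
        exacts [ha.trans hha, hb.trans hhb]
    _ = C * h ^ 3 := by field_simp; ring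

theorem spline_residual_bound_general (n : ℕ) (x : ℕ → ℝ) (f : ℝ → ℝ) (L K hhat : ℝ)
    (hx : ∀ i, 1 ≤ i → i ≤ n - 1 → x i < x (i + 1))
    (hf : ContDiffOn ℝ 4 f (Set.Icc (x 1) (x n)))
    (hLb : ∀ t ∈ Set.Icc (x 1) (x n),
      |iteratedDerivWithin 4 f (Set.Icc (x 1) (x n)) t| ≤ L)
    (hub : ∀ i, 1 ≤ i → i ≤ n - 1 → hstep x i ≤ hhat)
    (hK : 0 < K) :
    ∀ i, 2 ≤ i → i ≤ n - 1 →
      |3 * lamb x (i - 1) * mslope x f (i - 1) + 3 * mub x (i - 1) * mslope x f i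
        - lamb x (i - 1) * derivWithin f (Set.Icc (x 1) (x n)) (x (i - 1))
        - 2 * derivWithin f (Set.Icc (x 1) (x n)) (x i)
        - mub x (i - 1) * derivWithin f (Set.Icc (x 1) (x n)) (x (i + 1))|
      ≤ ((17 * K + K ^ 2) / 16 + 1) * L * hhat ^ 3 := by
  intro i hi2 hin
  have hi1 : i - 1 + 1 = i := by omega
  have hmono : MonotoneOn x (Icc 1 n) := (strictMonoOn_of_lt_add_one ordConnected_Icc
    fun j _ hj hj1 => hx j hj.1 (Nat.le_sub_one_of_lt hj1.2)).monotoneOn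
  have hmem : ∀ j, 1 ≤ j → j ≤ n → x j ∈ Icc (x 1) (x n) := fun j h1 hn =>
    ⟨hmono ⟨le_rfl, by omega⟩ ⟨h1, hn⟩ h1, hmono ⟨h1, hn⟩ ⟨by omega, le_rfl⟩ hn⟩
  have hac : x (i - 1) < x i := by simpa only [hi1] using hx (i - 1) (by omega) (by omega)
  have hcb : x i < x (i + 1) := hx i (by omega) hin
  have hca : x i - x (i - 1) ≤ hhat := by
    simpa only [hstep, hi1] using hub (i - 1) (by omega) (by omega)
  have hbc : x (i + 1) - x i ≤ hhat := hub i (by omega) hin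
  have hsu : UniqueDiffOn ℝ (Icc (x 1) (x n)) :=
    uniqueDiffOn_Icc (((hmem (i - 1) (by omega) (by omega)).1.trans_lt hac).trans_le
      (hmem i (by omega) (by omega)).2)
  have hL : 0 ≤ L := (abs_nonneg _).trans (hLb _ (hmem 1 le_rfl (by omega)))
  have hc := hmem i (by omega) (by omega)
  have hbound := abs_weighted_residual_le hac hcb hca hbc (by positivity)
    (abs_local_residual_le ordConnected_Icc hsu hf hLb hc (hmem (i - 1) (by omega) (by omega))
      hac.ne)
    (abs_local_residual_le ordConnected_Icc hsu hf hLb hc (hmem (i + 1) (by omega) (by omega))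
      hcb.ne')
  simp only [lamb, mub, mslope, hstep, hi1]
  refine hbound.trans ?_
  have hhat₀ : 0 ≤ hhat := by linarith
  gcongr
  linarith [sq_nonneg K]

/-- Bound on the residual
`R(i) = 3λᵢ₋₁mᵢ₋₁ + 3μᵢ₋₁mᵢ − λᵢ₋₁f'(xᵢ₋₁) − 2f'(xᵢ) − μᵢ₋₁f'(xᵢ₊₁)`:
if `f ∈ C⁴` with `|f⁽⁴⁾| ≤ L` and `ĥ/hⱼ ≤ K`, then
`|R(i)| ≤ ((17K + K²)/16 + 1)·L·ĥ³` for all `2 ≤ i ≤ n−1`. -/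
theorem spline_residual_bound (n : ℕ) (x : ℕ → ℝ) (f : ℝ → ℝ) (L K hhat : ℝ)
    (hn : 3 ≤ n)
    (hx : ∀ i, 1 ≤ i → i ≤ n - 1 → x i < x (i + 1))
    (hf : ContDiffOn ℝ 4 f (Set.Icc (x 1) (x n)))
    (hL : 0 < L)
    (hLb : ∀ t ∈ Set.Icc (x 1) (x n),
      |iteratedDerivWithin 4 f (Set.Icc (x 1) (x n)) t| ≤ L)
    (hub : ∀ i, 1 ≤ i → i ≤ n - 1 → hstep x i ≤ hhat)
    (hach : ∃ i, 1 ≤ i ∧ i ≤ n - 1 ∧ hhat = hstep x i)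
    (hK : 0 < K)
    (hKb : ∀ j, 1 ≤ j → j ≤ n - 1 → hhat / hstep x j ≤ K) :
    ∀ i, 2 ≤ i → i ≤ n - 1 →
      |3 * lamb x (i - 1) * mslope x f (i - 1) + 3 * mub x (i - 1) * mslope x f i
        - lamb x (i - 1) * derivWithin f (Set.Icc (x 1) (x n)) (x (i - 1))
        - 2 * derivWithin f (Set.Icc (x 1) (x n)) (x i)
        - mub x (i - 1) * derivWithin f (Set.Icc (x 1) (x n)) (x (i + 1))|
      ≤ ((17 * K + K ^ 2) / 16 + 1) * L * hhat ^ 3 :=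
  spline_residual_bound_general n x f L K hhat hx hf hLb hub hK
end

section
/- Let f be four times continuously differentiable on [x_1, x_n] with |f⁽⁴⁾(x)| ≤ L for all x, assume ĥ < 1, and suppose there exists K > 0 such that ĥ/h_j ≤ K for all 1 ≤ j ≤ n−1. Let ḟ_2, …, ḟ_{n−1} solve the spline system, and set ḟ_1 = f'(x_1), ḟ_n = f'(x_n). Let S be the piecewise function on [x_1, x_n] whose restriction to each [x_i, x_{i+1}] is the cubic Hermite interpolant of the data (f_i, ḟ_i), (f_{i+1}, ḟ_{i+1}). Then sup_{x ∈ [x_1, x_n]} |S(x) − f(x)| ≤ (1/384 + 2·((17K + K²)/16 + 1))·L·ĥ⁴, i.e. the spline interpolant has order of accuracy O(ĥ⁴). -/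
/-!
The error `eⱼ = ḟⱼ − f'(xⱼ)` of the computed slopes satisfies the spline system with right-hand
side the consistency error of the exact slopes, which Taylor expansion about `xⱼ` bounds by
`4Lĥ³`. The system is diagonally dominant (diagonal `2`, off-diagonal `λ + μ = 1`), so at an
index where `|eⱼ|` is maximal `2|eⱼ| ≤ 4Lĥ³ + |eⱼ|`, whence `|eⱼ| ≤ 4Lĥ³` for all `j`.
On each interval, Hermite interpolation is linear in the data and exact on cubics, so subtracting
the cubic Taylor polynomial of `f` at `xᵢ` expresses `S − f` through Taylor remainders and the
slope errors, weighted by the Hermite basis cubics (bounded by `1` and `4h/27`). This gives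
`|S − f| ≤ (10/3)Lĥ⁴`, which is below the stated constant since `K ≥ ĥ/ĥ = 1`.
-/

open Nat in
theorem hasDerivAt_sum_range_mul_pow_div_factorial (c : ℕ → ℝ) (a y : ℝ) (m : ℕ) :
    HasDerivAt (fun y => ∑ j ∈ Finset.range (m + 1), c j * (y - a) ^ j / j !)
      (∑ j ∈ Finset.range m, c (j + 1) * (y - a) ^ j / j !) y := by
  induction m with
  | zero => simpa using hasDerivAt_const y (c 0)
  | succ m ih =>
    have hterm : HasDerivAt (fun y => c (m + 1) * (y - a) ^ (m + 1) / (m + 1)!)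
        (c (m + 1) * (y - a) ^ m / m !) y := by
      refine ((hasDerivAt_id y).sub_const a |>.pow (m + 1) |>.const_mul _ |>.div_const _).congr_deriv ?_
      rw [Nat.factorial_succ]
      push_cast
      field_simp
      simp
    simpa only [Finset.sum_range_succ _ (m + 1), Finset.sum_range_succ _ m]
      using ih.fun_add hterm

theorem Convex.abs_sub_le_mul_abs_sub_pow_succ {s : Set ℝ} {g g' : ℝ → ℝ} {a C : ℝ} {k : ℕ}
    (hs : Convex ℝ s) (hC : 0 ≤ C) (ha : a ∈ s)
    (hg : ∀ y ∈ s, HasDerivWithinAt g (g' y) s y)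
    (hg' : ∀ y ∈ s, |g' y| ≤ C * |y - a| ^ k) {y : ℝ} (hy : y ∈ s) :
    |g y - g a| ≤ C * |y - a| ^ (k + 1) := by
  have hsub : Set.uIcc a y ⊆ s := hs.ordConnected.uIcc_subset ha hy
  have hbound : ∀ t ∈ Set.uIcc a y, ‖g' t‖ ≤ C * |y - a| ^ k := fun t ht =>
    (hg' t (hsub ht)).trans <| mul_le_mul_of_nonneg_left
      (pow_le_pow_left₀ (abs_nonneg _) (Set.abs_sub_left_of_mem_uIcc ht) k) hC
  calc |g y - g a| ≤ C * |y - a| ^ k * ‖y - a‖ :=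
        (convex_uIcc a y).norm_image_sub_le_of_norm_hasDerivWithin_le
          (fun t ht => (hg t (hsub ht)).mono hsub) hbound Set.left_mem_uIcc Set.right_mem_uIcc
    _ = C * |y - a| ^ (k + 1) := by rw [Real.norm_eq_abs, pow_succ, mul_assoc]

open Nat in
theorem abs_iteratedDerivWithin_sub_taylor_le {f : ℝ → ℝ} {s : Set ℝ} {a C : ℝ} {N : ℕ}
    (hs : Convex ℝ s) (hu : UniqueDiffOn ℝ s) (hf : ContDiffOn ℝ N f s) (hC : 0 ≤ C)
    (ha : a ∈ s) (hN : ∀ y ∈ s, |iteratedDerivWithin N f s y| ≤ C) :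
    ∀ m k, k + m = N → ∀ y ∈ s,
      |iteratedDerivWithin k f s y -
          ∑ j ∈ Finset.range m, iteratedDerivWithin (k + j) f s a * (y - a) ^ j / j !|
        ≤ C * |y - a| ^ m := by
  intro m
  induction m with
  | zero => intro k hk y hy; simpa [← hk] using hN y hy
  | succ m ih =>
    intro k hk y hy
    have hderiv : ∀ z ∈ s, HasDerivWithinAt (iteratedDerivWithin k f s)
        (iteratedDerivWithin (k + 1) f s z) s z := fun z hz => by
      rw [iteratedDerivWithin_succ]
      exact (hf.differentiableOn_iteratedDerivWithin (by norm_cast; omega) hu z hz).hasDerivWithinAt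
    have key := hs.abs_sub_le_mul_abs_sub_pow_succ hC ha
      (fun z hz => (hderiv z hz).sub
        (hasDerivAt_sum_range_mul_pow_div_factorial
          (fun j => iteratedDerivWithin (k + j) f s a) a z m).hasDerivWithinAt)
      (fun z hz => by
        simpa only [add_right_comm k 1, ← add_assoc] using ih (k + 1) (by omega) z hz) hy
    simpa [Finset.sum_range_succ'] using key

/-- `f'` stands for the derivative of `f`; in the application it is `derivWithin f s`, and the
cubic is the Taylor polynomial of `f` at `a`. -/
def CubicTaylorApprox (f f' : ℝ → ℝ) (s : Set ℝ) (L a : ℝ) : Prop :=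
  ∃ c₂ c₃ : ℝ, ∀ y ∈ s,
    |f y - (f a + f' a * (y - a) + c₂ * (y - a) ^ 2 / 2 + c₃ * (y - a) ^ 3 / 6)|
        ≤ L * |y - a| ^ 4 ∧
      |f' y - (f' a + c₂ * (y - a) + c₃ * (y - a) ^ 2 / 2)| ≤ L * |y - a| ^ 3

theorem cubicTaylorApprox_of_abs_iteratedDerivWithin_le {f : ℝ → ℝ} {s : Set ℝ} {L a : ℝ}
    (hs : Convex ℝ s) (hu : UniqueDiffOn ℝ s) (hf : ContDiffOn ℝ 4 f s) (hL : 0 ≤ L)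
    (ha : a ∈ s) (hbound : ∀ y ∈ s, |iteratedDerivWithin 4 f s y| ≤ L) :
    CubicTaylorApprox f (derivWithin f s) s L a := by
  have taylor := abs_iteratedDerivWithin_sub_taylor_le hs hu hf hL ha hbound
  refine ⟨iteratedDerivWithin 2 f s a, iteratedDerivWithin 3 f s a, fun y hy => ⟨?_, ?_⟩⟩
  · simpa [Finset.sum_range_succ, Nat.factorial, add_assoc] using taylor 4 0 rfl y hy
  · simpa [Finset.sum_range_succ, Nat.factorial, add_assoc, sub_add_eq_sub_sub]
      using taylor 3 1 rfl y hy

theorem abs_convex_combination_le {l m X Y B : ℝ} (hl : 0 ≤ l) (hm : 0 ≤ m) (hlm : l + m = 1)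
    (hX : |X| ≤ B) (hY : |Y| ≤ B) : |l * X + m * Y| ≤ B := by
  calc |l * X + m * Y| ≤ l * |X| + m * |Y| := by
        simpa [abs_mul, abs_of_nonneg hl, abs_of_nonneg hm] using abs_add_le (l * X) (m * Y)
    _ ≤ l * B + m * B := by gcongr
    _ = B := by rw [← add_mul, hlm, one_mul]

theorem abs_three_mul_div_sub_le {e δ h H L : ℝ} (hh : 0 < h) (hH : h ≤ H) (hL : 0 ≤ L)
    (he : |e| ≤ L * h ^ 4) (hδ : |δ| ≤ L * h ^ 3) : |3 * e / h - δ| ≤ 4 * (L * H ^ 3) := by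
  have he' : |3 * e / h| ≤ 3 * (L * h ^ 3) := by
    rw [abs_div, abs_mul, abs_of_pos hh, abs_of_pos three_pos, div_le_iff₀ hh]
    linarith
  have hh3 : L * h ^ 3 ≤ L * H ^ 3 := by gcongr
  linarith [abs_sub (3 * e / h) δ]

theorem abs_spline_consistency_le {f f' : ℝ → ℝ} {s : Set ℝ} {L H a b c : ℝ}
    (hL : 0 ≤ L) (hT : CubicTaylorApprox f f' s L b) (ha : a ∈ s) (hc : c ∈ s)
    (hab : a < b) (hbc : b < c) (haH : b - a ≤ H) (hcH : c - b ≤ H) :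
    |3 * ((c - b) / ((b - a) + (c - b)) * ((f b - f a) / (b - a))
          + (b - a) / ((b - a) + (c - b)) * ((f c - f b) / (c - b)))
        - ((c - b) / ((b - a) + (c - b)) * f' a + 2 * f' b
          + (b - a) / ((b - a) + (c - b)) * f' c)|
      ≤ 4 * (L * H ^ 3) := by
  have hU := sub_pos.2 hab
  have hV := sub_pos.2 hbc
  obtain ⟨c₂, c₃, hTb⟩ := hT
  obtain ⟨hra, hδa⟩ := hTb a ha
  obtain ⟨hrc, hδc⟩ := hTb c hc
  rw [abs_sub_comm a b, abs_of_pos hU] at hra hδa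
  rw [abs_of_pos hV] at hrc hδc
  -- the `c₂`-terms cancel because `λ (b - a) = μ (c - b)`
  have key : 3 * ((c - b) / ((b - a) + (c - b)) * ((f b - f a) / (b - a))
          + (b - a) / ((b - a) + (c - b)) * ((f c - f b) / (c - b)))
        - ((c - b) / ((b - a) + (c - b)) * f' a + 2 * f' b
          + (b - a) / ((b - a) + (c - b)) * f' c)
      = (c - b) / ((b - a) + (c - b)) *
          (3 * -(f a - (f b + f' b * (a - b) + c₂ * (a - b) ^ 2 / 2 + c₃ * (a - b) ^ 3 / 6))
            / (b - a) - (f' a - (f' b + c₂ * (a - b) + c₃ * (a - b) ^ 2 / 2)))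
        + (b - a) / ((b - a) + (c - b)) *
          (3 * (f c - (f b + f' b * (c - b) + c₂ * (c - b) ^ 2 / 2 + c₃ * (c - b) ^ 3 / 6))
            / (c - b) - (f' c - (f' b + c₂ * (c - b) + c₃ * (c - b) ^ 2 / 2))) := by
    field_simp
    ring
  rw [key]
  refine abs_convex_combination_le (by positivity) (by positivity) ?_
    (abs_three_mul_div_sub_le hU haH hL (by rwa [abs_neg]) hδa)
    (abs_three_mul_div_sub_le hV hcH hL hrc hδc)
  rw [← add_div, add_comm, div_self (by positivity)]

theorem abs_le_of_tridiagonal_eq {n : ℕ} {e lam mu τ : ℕ → ℝ} {B : ℝ} (hB : 0 ≤ B)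
    (he₁ : e 1 = 0) (heₙ : e n = 0)
    (hdom : ∀ j, 2 ≤ j → j ≤ n - 1 → |lam j| + |mu j| ≤ 1)
    (heq : ∀ j, 2 ≤ j → j ≤ n - 1 → lam j * e (j - 1) + 2 * e j + mu j * e (j + 1) = τ j)
    (hτ : ∀ j, 2 ≤ j → j ≤ n - 1 → |τ j| ≤ B) {j : ℕ} (hj₁ : 1 ≤ j) (hjₙ : j ≤ n) :
    |e j| ≤ B := by
  obtain ⟨p, hp, hmax⟩ := (Finset.Icc 1 n).exists_max_image (fun j => |e j|)
    ⟨j, Finset.mem_Icc.2 ⟨hj₁, hjₙ⟩⟩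
  have hmax' : ∀ q, 1 ≤ q → q ≤ n → |e q| ≤ |e p| := fun q h₁ hₙ =>
    hmax q (Finset.mem_Icc.2 ⟨h₁, hₙ⟩)
  refine (hmax' j hj₁ hjₙ).trans ?_
  obtain ⟨hp₁, hpₙ⟩ := Finset.mem_Icc.1 hp
  rcases (show p = 1 ∨ p = n ∨ (2 ≤ p ∧ p ≤ n - 1) by omega) with rfl | rfl | ⟨hp₂, hp₃⟩
  · rwa [he₁, abs_zero]
  · rwa [heₙ, abs_zero]
  have hneighbours : |lam p * e (p - 1) + mu p * e (p + 1)| ≤ |e p| :=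
    calc |lam p * e (p - 1) + mu p * e (p + 1)|
        ≤ |lam p| * |e (p - 1)| + |mu p| * |e (p + 1)| := by
          simpa only [abs_mul] using abs_add_le (lam p * e (p - 1)) (mu p * e (p + 1))
      _ ≤ |lam p| * |e p| + |mu p| * |e p| := by
          gcongr ?_ * ?_ + ?_ * ?_ <;> exact hmax' _ (by omega) (by omega)
      _ ≤ |e p| := by
          rw [← add_mul]
          exact mul_le_of_le_one_left (abs_nonneg _) (hdom p hp₂ hp₃)
  have h2 : 2 * e p = τ p - (lam p * e (p - 1) + mu p * e (p + 1)) := by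
    linarith [heq p hp₂ hp₃]
  have := abs_sub (τ p) (lam p * e (p - 1) + mu p * e (p + 1))
  rw [← h2, abs_mul, abs_two] at this
  linarith [hτ p hp₂ hp₃]

theorem abs_lamb_add_abs_mub {x : ℕ → ℝ} {i : ℕ} (h₀ : 0 < hstep x i)
    (h₁ : 0 < hstep x (i + 1)) :
    |lamb x i| + |mub x i| = 1 := by
  rw [lamb, mub, abs_of_nonneg (by positivity), abs_of_nonneg (by positivity), ← add_div,
    add_comm, div_self (by positivity)]

theorem abs_spline_slope_error_le {n : ℕ} {x : ℕ → ℝ} {f f' : ℝ → ℝ} {df : ℕ → ℝ}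
    {s : Set ℝ} {L H : ℝ} (hL : 0 ≤ L) (hH : 0 ≤ H)
    (hx : ∀ i, 1 ≤ i → i ≤ n - 1 → x i < x (i + 1))
    (hub : ∀ i, 1 ≤ i → i ≤ n - 1 → hstep x i ≤ H)
    (hxs : ∀ j, 1 ≤ j → j ≤ n → x j ∈ s)
    (hT : ∀ j, 1 ≤ j → j ≤ n → CubicTaylorApprox f f' s L (x j))
    (hdf₁ : df 1 = f' (x 1)) (hdfₙ : df n = f' (x n))
    (hsys : ∀ j, 2 ≤ j → j ≤ n - 1 →
      lamb x (j - 1) * df (j - 1) + 2 * df j + mub x (j - 1) * df (j + 1)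
        = 3 * (lamb x (j - 1) * mslope x f (j - 1) + mub x (j - 1) * mslope x f j))
    {j : ℕ} (hj₁ : 1 ≤ j) (hjₙ : j ≤ n) :
    |df j - f' (x j)| ≤ 4 * (L * H ^ 3) := by
  have hpos : ∀ i, 1 ≤ i → i ≤ n - 1 → 0 < hstep x i := fun i h₁ hₙ => sub_pos.2 (hx i h₁ hₙ)
  refine abs_le_of_tridiagonal_eq (e := fun j => df j - f' (x j))
    (lam := fun j => lamb x (j - 1)) (mu := fun j => mub x (j - 1))
    (τ := fun j => 3 * (lamb x (j - 1) * mslope x f (j - 1) + mub x (j - 1) * mslope x f j)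
      - (lamb x (j - 1) * f' (x (j - 1)) + 2 * f' (x j) + mub x (j - 1) * f' (x (j + 1))))
    (by positivity) (sub_eq_zero.2 hdf₁) (sub_eq_zero.2 hdfₙ) ?_ ?_ ?_ hj₁ hjₙ
  · intro j hj₂ hjₙ
    obtain ⟨k, rfl⟩ : ∃ k, j = k + 1 := ⟨j - 1, by omega⟩
    exact (abs_lamb_add_abs_mub (hpos k (by omega) (by omega)) (hpos (k + 1) (by omega) hjₙ)).le
  · intro j hj₂ hjₙ
    linear_combination hsys j hj₂ hjₙ
  · intro j hj₂ hjₙ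
    obtain ⟨k, rfl⟩ : ∃ k, j = k + 1 := ⟨j - 1, by omega⟩
    exact abs_spline_consistency_le hL (hT (k + 1) (by omega) (by omega))
      (hxs k (by omega) (by omega)) (hxs (k + 2) (by omega) (by omega))
      (hx k (by omega) (by omega)) (hx (k + 1) (by omega) hjₙ)
      (hub k (by omega) (by omega)) (hub (k + 1) (by omega) hjₙ)

theorem hermite_sub_eq (a b t fa fb da db ft c₁ c₂ c₃ : ℝ) (hab : a ≠ b) :
    hermite a b fa fb da db t - ft =
      (fb - (fa + c₁ * (b - a) + c₂ * (b - a) ^ 2 / 2 + c₃ * (b - a) ^ 3 / 6))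
          * ((t - a) ^ 2 * (3 * (b - a) - 2 * (t - a)) / (b - a) ^ 3)
        + (db - (c₁ + c₂ * (b - a) + c₃ * (b - a) ^ 2 / 2))
          * ((t - a) ^ 2 * (t - b) / (b - a) ^ 2)
        + (da - c₁) * ((t - a) * (t - b) ^ 2 / (b - a) ^ 2)
        - (ft - (fa + c₁ * (t - a) + c₂ * (t - a) ^ 2 / 2 + c₃ * (t - a) ^ 3 / 6)) := by
  have : b - a ≠ 0 := sub_ne_zero.2 hab.symm
  simp only [hermite]
  field_simp
  ring

theorem mul_sub_sq_le {u h : ℝ} (hu : 0 ≤ u) (huh : u ≤ h) :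
    u * (h - u) ^ 2 ≤ 4 / 27 * h ^ 3 := by
  nlinarith [mul_nonneg (sq_nonneg (3 * u - h)) (by linarith : 0 ≤ 4 * h - 3 * u)]

theorem abs_hermite_basis_le {a b t : ℝ} (hab : a < b) (ht : t ∈ Set.Icc a b) :
    |(t - a) ^ 2 * (3 * (b - a) - 2 * (t - a)) / (b - a) ^ 3| ≤ 1 ∧
      |(t - a) ^ 2 * (t - b) / (b - a) ^ 2| ≤ 4 / 27 * (b - a) ∧
      |(t - a) * (t - b) ^ 2 / (b - a) ^ 2| ≤ 4 / 27 * (b - a) := by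
  obtain ⟨hat, htb⟩ := ht
  have hh : 0 < b - a := sub_pos.2 hab
  refine ⟨?_, ?_, ?_⟩
  · rw [abs_le, le_div_iff₀ (pow_pos hh 3), div_le_iff₀ (pow_pos hh 3)]
    constructor
    · nlinarith [pow_pos hh 3,
        mul_nonneg (sq_nonneg (t - a)) (by linarith : 0 ≤ 3 * (b - a) - 2 * (t - a))]
    · nlinarith [mul_nonneg (sq_nonneg (b - t)) (by linarith : 0 ≤ (b - a) + 2 * (t - a))]
  · have := mul_sub_sq_le (sub_nonneg.2 htb) (by linarith : b - t ≤ b - a)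
    rw [abs_div, abs_of_pos (pow_pos hh 2), div_le_iff₀ (pow_pos hh 2), abs_mul,
      abs_of_nonpos (by linarith : t - b ≤ 0), abs_sq]
    nlinarith
  · have := mul_sub_sq_le (sub_nonneg.2 hat) (by linarith : t - a ≤ b - a)
    rw [abs_div, abs_of_pos (pow_pos hh 2), div_le_iff₀ (pow_pos hh 2), abs_mul,
      abs_of_nonneg (sub_nonneg.2 hat), abs_sq]
    nlinarith

theorem abs_hermite_sub_le {f f' : ℝ → ℝ} {s : Set ℝ} {L H E a b t da db : ℝ}
    (hL : 0 ≤ L) (hT : CubicTaylorApprox f f' s L a) (hab : a < b) (hs : Set.Icc a b ⊆ s)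
    (hH : b - a ≤ H) (ht : t ∈ Set.Icc a b)
    (hda : |da - f' a| ≤ E) (hdb : |db - f' b| ≤ E) :
    |hermite a b (f a) (f b) da db t - f t| ≤ 58 / 27 * (L * H ^ 4) + 8 / 27 * (E * H) := by
  obtain ⟨c₂, c₃, hTa⟩ := hT
  obtain ⟨hrb, hδb⟩ := hTa b (hs ⟨hab.le, le_rfl⟩)
  obtain ⟨hrt, -⟩ := hTa t (hs ht)
  obtain ⟨hφ, hψb, hψa⟩ := abs_hermite_basis_le hab ht
  have hh : 0 < b - a := sub_pos.2 hab
  have hta : |t - a| ≤ H := by rw [abs_of_nonneg (sub_nonneg.2 ht.1)]; linarith [ht.2]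
  rw [abs_of_pos hh] at hrb hδb
  have hdb' : |db - (f' a + c₂ * (b - a) + c₃ * (b - a) ^ 2 / 2)| ≤ E + L * H ^ 3 := by
    have := abs_add_le (db - f' b) (f' b - (f' a + c₂ * (b - a) + c₃ * (b - a) ^ 2 / 2))
    rw [sub_add_sub_cancel] at this
    have : L * (b - a) ^ 3 ≤ L * H ^ 3 := by gcongr
    linarith
  have hψ : 4 / 27 * (b - a) ≤ 4 / 27 * H := by linarith
  rw [hermite_sub_eq a b t _ _ _ _ _ (f' a) c₂ c₃ hab.ne]
  refine (abs_sub _ _).trans ?_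
  grw [abs_add_three]
  simp only [abs_mul]
  calc _ ≤ L * H ^ 4 * 1 + (E + L * H ^ 3) * (4 / 27 * H) + E * (4 / 27 * H) + L * H ^ 4 := by
        gcongr ?_ * ?_ + ?_ * ?_ + ?_ * ?_ + ?_
        · exact hrb.trans (by gcongr)
        · exact (abs_nonneg _).trans hdb'
        · exact hψb.trans hψ
        · exact (abs_nonneg _).trans hda
        · exact hψa.trans hψ
        · exact hrt.trans (by gcongr)
    _ = 58 / 27 * (L * H ^ 4) + 8 / 27 * (E * H) := by ring

theorem spline_fourth_order_general (n : ℕ) (x : ℕ → ℝ) (f : ℝ → ℝ)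
    (df : ℕ → ℝ) (L K hhat : ℝ)
    (hx : ∀ i, 1 ≤ i → i ≤ n - 1 → x i < x (i + 1))
    (hf : ContDiffOn ℝ 4 f (Set.Icc (x 1) (x n)))
    (hL : 0 < L)
    (hLb : ∀ t ∈ Set.Icc (x 1) (x n),
      |iteratedDerivWithin 4 f (Set.Icc (x 1) (x n)) t| ≤ L)
    (hub : ∀ i, 1 ≤ i → i ≤ n - 1 → hstep x i ≤ hhat)
    (hach : ∃ i, 1 ≤ i ∧ i ≤ n - 1 ∧ hhat = hstep x i)
    (hKb : ∀ j, 1 ≤ j → j ≤ n - 1 → hhat / hstep x j ≤ K)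
    (hdf1 : df 1 = derivWithin f (Set.Icc (x 1) (x n)) (x 1))
    (hdfn : df n = derivWithin f (Set.Icc (x 1) (x n)) (x n))
    (hsys : ∀ j, 2 ≤ j → j ≤ n - 1 →
      lamb x (j - 1) * df (j - 1) + 2 * df j + mub x (j - 1) * df (j + 1)
        = 3 * (lamb x (j - 1) * mslope x f (j - 1) + mub x (j - 1) * mslope x f j)) :
    ∀ i, 1 ≤ i → i ≤ n - 1 → ∀ t ∈ Set.Icc (x i) (x (i + 1)),
      |hermite (x i) (x (i + 1)) (f (x i)) (f (x (i + 1))) (df i) (df (i + 1)) t - f t|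
        ≤ (1 / 384 + 2 * ((17 * K + K ^ 2) / 16 + 1)) * L * hhat ^ 4 := by
  intro i hi₁ hiₙ t ht
  set s := Set.Icc (x 1) (x n)
  have hmono : MonotoneOn x (Set.Icc 1 n) :=
    monotoneOn_of_le_succ Set.ordConnected_Icc fun j _ hj hj' => by
      rw [Order.succ_eq_add_one] at hj' ⊢
      exact (hx j hj.1 (by have := hj'.2; omega)).le
  have hxs : ∀ j, 1 ≤ j → j ≤ n → x j ∈ s := fun j h₁ hₙ =>
    ⟨hmono ⟨le_rfl, by omega⟩ ⟨h₁, hₙ⟩ h₁, hmono ⟨h₁, hₙ⟩ ⟨by omega, le_rfl⟩ hₙ⟩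
  have hxi := hxs i hi₁ (by omega)
  have hxi' := hxs (i + 1) (by omega) (by omega)
  have hs : UniqueDiffOn ℝ s := uniqueDiffOn_Icc (hxi.1.trans_lt ((hx i hi₁ hiₙ).trans_le hxi'.2))
  have hT : ∀ a ∈ s, CubicTaylorApprox f (derivWithin f s) s L a := fun a ha =>
    cubicTaylorApprox_of_abs_iteratedDerivWithin_le (convex_Icc _ _) hs hf hL.le ha hLb
  obtain ⟨i₀, hi₀₁, hi₀ₙ, hi₀⟩ := hach
  have hhat_pos : 0 < hhat := hi₀ ▸ sub_pos.2 (hx i₀ hi₀₁ hi₀ₙ)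
  have hK : 1 ≤ K := by
    have := hKb i₀ hi₀₁ hi₀ₙ
    rwa [← hi₀, div_self hhat_pos.ne'] at this
  have herr : ∀ j, 1 ≤ j → j ≤ n → |df j - derivWithin f s (x j)| ≤ 4 * (L * hhat ^ 3) :=
    fun j hj₁ hjₙ => abs_spline_slope_error_le hL.le hhat_pos.le hx hub hxs
      (fun j h₁ hₙ => hT _ (hxs j h₁ hₙ)) hdf1 hdfn hsys hj₁ hjₙ
  calc _ ≤ 58 / 27 * (L * hhat ^ 4) + 8 / 27 * (4 * (L * hhat ^ 3) * hhat) :=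
        abs_hermite_sub_le hL.le (hT _ hxi) (hx i hi₁ hiₙ) (Set.Icc_subset_Icc hxi.1 hxi'.2)
          (hub i hi₁ hiₙ) ht (herr i hi₁ (by omega)) (herr (i + 1) (by omega) (by omega))
    _ = 10 / 3 * (L * hhat ^ 4) := by ring
    _ ≤ (1 / 384 + 2 * ((17 * K + K ^ 2) / 16 + 1)) * L * hhat ^ 4 := by
        rw [mul_assoc]
        gcongr
        nlinarith

/-- Fourth-order accuracy of the cubic spline interpolant: on each interval
`[xᵢ, xᵢ₊₁]` (hence uniformly on `[x₁, xₙ]`) the spline built from the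
derivative values solving the spline system satisfies
`|S(x) − f(x)| ≤ (1/384 + 2·((17K + K²)/16 + 1))·L·ĥ⁴`. -/
theorem spline_fourth_order (n : ℕ) (x : ℕ → ℝ) (f : ℝ → ℝ)
    (df : ℕ → ℝ) (L K hhat : ℝ) (hn : 3 ≤ n)
    (hx : ∀ i, 1 ≤ i → i ≤ n - 1 → x i < x (i + 1))
    (hf : ContDiffOn ℝ 4 f (Set.Icc (x 1) (x n)))
    (hL : 0 < L)
    (hLb : ∀ t ∈ Set.Icc (x 1) (x n),
      |iteratedDerivWithin 4 f (Set.Icc (x 1) (x n)) t| ≤ L)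
    (hhat1 : hhat < 1)
    (hub : ∀ i, 1 ≤ i → i ≤ n - 1 → hstep x i ≤ hhat)
    (hach : ∃ i, 1 ≤ i ∧ i ≤ n - 1 ∧ hhat = hstep x i)
    (hK : 0 < K)
    (hKb : ∀ j, 1 ≤ j → j ≤ n - 1 → hhat / hstep x j ≤ K)
    (hdf1 : df 1 = derivWithin f (Set.Icc (x 1) (x n)) (x 1))
    (hdfn : df n = derivWithin f (Set.Icc (x 1) (x n)) (x n))
    (hsys : ∀ j, 2 ≤ j → j ≤ n - 1 →
      lamb x (j - 1) * df (j - 1) + 2 * df j + mub x (j - 1) * df (j + 1)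
        = 3 * (lamb x (j - 1) * mslope x f (j - 1) + mub x (j - 1) * mslope x f j)) :
    ∀ i, 1 ≤ i → i ≤ n - 1 → ∀ t ∈ Set.Icc (x i) (x (i + 1)),
      |hermite (x i) (x (i + 1)) (f (x i)) (f (x (i + 1))) (df i) (df (i + 1)) t - f t|
        ≤ (1 / 384 + 2 * ((17 * K + K ^ 2) / 16 + 1)) * L * hhat ^ 4 :=
  spline_fourth_order_general n x f df L K hhat hx hf hL hLb hub hach hKb hdf1 hdfn hsys
end

section
/- Let f be four times continuously differentiable on [x_1, x_n] with |f⁽⁴⁾(x)| ≤ L for all x, suppose there exists K > 0 such that ĥ/h_j ≤ K for all 1 ≤ j ≤ n−1, and let ḟ_2, …, ḟ_{n−1} solve the spline system. Fix an interior index i_0 (2 ≤ i_0 ≤ n−1) and a value f̃_{i_0} with |f'(x_{i_0}) − f̃_{i_0}| ≤ T·ĥ^{p_{i_0}} (T, p_{i_0} > 0). Define modified derivative values by ḋ_{i_0} = f̃_{i_0} and ḋ_i = ḟ_i for i ≠ i_0 (with ḋ_1 = f'(x_1), ḋ_n = f'(x_n)), and let S be the piecewise cubic whose restriction to each [x_i,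 x_{i+1}] is the cubic Hermite interpolant of (f_i, ḋ_i), (f_{i+1}, ḋ_{i+1}). Then: (i) |ḋ_{i_0} − f'(x_{i_0})| ≤ T·ĥ^{p_{i_0}} and |ḋ_i − f'(x_i)| ≤ ((17K + K²)/16 + 1)·L·ĥ³ for every 2 ≤ i ≤ n−1 with i ≠ i_0; (ii) at every interior knot x_j with 2 ≤ j ≤ n−1 and j ∉ {i_0 − 1, i_0, i_0 + 1}, the second derivatives of the two adjacent cubic pieces of S coincide, i.e. S is twice continuously differentiable at x_j. -/
open Set
open scoped Nat

theorem deriv_deriv_cubic (x₀ a₀ a₁ a₂ a₃ t : ℝ) :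
    deriv (deriv fun t => a₀ + a₁ * (t - x₀) + a₂ * (t - x₀) ^ 2 + a₃ * (t - x₀) ^ 3) t
      = 2 * a₂ + 6 * a₃ * (t - x₀) := by
  have hs : ∀ t, HasDerivAt (fun t => t - x₀) 1 t := fun t => (hasDerivAt_id t).sub_const x₀
  have hderiv : deriv (fun t => a₀ + a₁ * (t - x₀) + a₂ * (t - x₀) ^ 2 + a₃ * (t - x₀) ^ 3)
      = fun t => a₁ + 2 * a₂ * (t - x₀) + 3 * a₃ * (t - x₀) ^ 2 := by
    funext t
    refine HasDerivAt.deriv ?_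
    refine (((((hs t).const_mul a₁).const_add a₀).fun_add
      (((hs t).fun_pow 2).const_mul a₂)).fun_add (((hs t).fun_pow 3).const_mul a₃)).congr_deriv ?_
    push_cast; ring
  rw [hderiv]
  refine HasDerivAt.deriv ?_
  refine ((((hs t).const_mul (2 * a₂)).const_add a₁).fun_add
    (((hs t).fun_pow 2).const_mul (3 * a₃))).congr_deriv ?_
  push_cast; ring

theorem hermite_eq_cubic (xi xip fi fip di dip : ℝ) :
    hermite xi xip fi fip di dip = fun t =>
      fi + di * (t - xi)
        + ((((fip - fi) / (xip - xi) - di) / (xip - xi))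
          - (dip + di - 2 * ((fip - fi) / (xip - xi))) / (xip - xi)) * (t - xi) ^ 2
        + (dip + di - 2 * ((fip - fi) / (xip - xi))) / (xip - xi) ^ 2 * (t - xi) ^ 3 := by
  funext t
  rcases eq_or_ne xip xi with rfl | h
  · simp [hermite]
  · simp only [hermite]; field_simp; ring

theorem deriv_deriv_hermite_left {xi xip : ℝ} (h : xi ≠ xip) (fi fip di dip : ℝ) :
    deriv (deriv (hermite xi xip fi fip di dip)) xi
      = (6 * ((fip - fi) / (xip - xi)) - 4 * di - 2 * dip) / (xip - xi) := by
  have : xip - xi ≠ 0 := sub_ne_zero.2 h.symm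
  rw [hermite_eq_cubic, deriv_deriv_cubic]
  field_simp; ring

theorem deriv_deriv_hermite_right {xi xip : ℝ} (h : xi ≠ xip) (fi fip di dip : ℝ) :
    deriv (deriv (hermite xi xip fi fip di dip)) xip
      = (2 * di + 4 * dip - 6 * ((fip - fi) / (xip - xi))) / (xip - xi) := by
  have : xip - xi ≠ 0 := sub_ne_zero.2 h.symm
  rw [hermite_eq_cubic, deriv_deriv_cubic]
  field_simp; ring

theorem norm_sub_taylorWithinEval_le {E : Type*} [NormedAddCommGroup E] [NormedSpace ℝ E]
    {f : ℝ → E} {a b c t C : ℝ} {n : ℕ} (hab : a < b)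
    (hf : ContDiffOn ℝ (n + 1) f (Icc a b)) (hc : c ∈ Icc a b) (ht : t ∈ Icc a b)
    (hC : ∀ y ∈ Icc a b, ‖iteratedDerivWithin (n + 1) f (Icc a b) y‖ ≤ C) :
    ‖f t - taylorWithinEval f n (Icc a b) c t‖ ≤ C * |t - c| ^ (n + 1) / n ! := by
  have hf' : DifferentiableOn ℝ (iteratedDerivWithin n f (Icc a b)) (Icc a b) :=
    hf.differentiableOn_iteratedDerivWithin (mod_cast n.lt_succ_self) (uniqueDiffOn_Icc hab)
  have hsub : uIcc c t ⊆ Icc a b := uIcc_subset_Icc hc ht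
  have hderiv : ∀ y ∈ uIcc c t, HasDerivWithinAt (fun y => taylorWithinEval f n (Icc a b) y t)
      (((n ! : ℝ)⁻¹ * (t - y) ^ n) • iteratedDerivWithin (n + 1) f (Icc a b) y) (uIcc c t) y :=
    fun y hy => (hasDerivWithinAt_taylorWithinEval_at_Icc t hab (hsub hy) hf.of_succ hf').mono hsub
  have hbound : ∀ y ∈ uIcc c t,
      ‖((n ! : ℝ)⁻¹ * (t - y) ^ n) • iteratedDerivWithin (n + 1) f (Icc a b) y‖
        ≤ (n ! : ℝ)⁻¹ * |t - c| ^ n * C := by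
    intro y hy
    rw [norm_smul, Real.norm_eq_abs, abs_mul, abs_pow, abs_inv, Nat.abs_cast]
    gcongr _ * ?_ ^ n * ?_
    · exact abs_sub_right_of_mem_uIcc hy
    · exact hC y (hsub hy)
  have hmvt := (convex_uIcc c t).norm_image_sub_le_of_norm_hasDerivWithin_le hderiv hbound
    left_mem_uIcc right_mem_uIcc
  rw [taylorWithinEval_self, Real.norm_eq_abs] at hmvt
  refine hmvt.trans_eq ?_
  field_simp
  ring

section CubicTaylor

variable {f : ℝ → ℝ} {a b c t L : ℝ}

theorem abs_sub_cubic_taylor_le (hab : a < b) (hf : ContDiffOn ℝ 4 f (Icc a b))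
    (hL : ∀ y ∈ Icc a b, |iteratedDerivWithin 4 f (Icc a b) y| ≤ L)
    (hc : c ∈ Icc a b) (ht : t ∈ Icc a b) :
    |f t - (f c + derivWithin f (Icc a b) c * (t - c)
      + iteratedDerivWithin 2 f (Icc a b) c / 2 * (t - c) ^ 2
      + iteratedDerivWithin 3 f (Icc a b) c / 6 * (t - c) ^ 3)| ≤ L * |t - c| ^ 4 / 6 := by
  have hrem := norm_sub_taylorWithinEval_le (n := 3) hab hf hc ht hL
  simp only [taylor_within_apply, Finset.sum_range_succ, Finset.sum_range_zero,
    iteratedDerivWithin_zero, iteratedDerivWithin_one, Real.norm_eq_abs, smul_eq_mul] at hrem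
  norm_num [Nat.factorial] at hrem
  convert hrem using 3; ring

theorem abs_sub_quadratic_taylor_derivWithin_le (hab : a < b) (hf : ContDiffOn ℝ 4 f (Icc a b))
    (hL : ∀ y ∈ Icc a b, |iteratedDerivWithin 4 f (Icc a b) y| ≤ L)
    (hc : c ∈ Icc a b) (ht : t ∈ Icc a b) :
    |derivWithin f (Icc a b) t - (derivWithin f (Icc a b) c
      + iteratedDerivWithin 2 f (Icc a b) c * (t - c)
      + iteratedDerivWithin 3 f (Icc a b) c / 2 * (t - c) ^ 2)| ≤ L * |t - c| ^ 3 / 2 := by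
  have hf' : ContDiffOn ℝ (2 + 1) (derivWithin f (Icc a b)) (Icc a b) :=
    hf.derivWithin (uniqueDiffOn_Icc hab) (by norm_num)
  have hD : ∀ k, iteratedDerivWithin k (derivWithin f (Icc a b)) (Icc a b)
      = iteratedDerivWithin (k + 1) f (Icc a b) := fun k => iteratedDerivWithin_succ'.symm
  have hrem := norm_sub_taylorWithinEval_le (n := 2) hab hf' hc ht fun y hy => by
    rw [hD, Real.norm_eq_abs]; exact hL y hy
  simp only [taylor_within_apply, Finset.sum_range_succ, Finset.sum_range_zero, hD,
    Real.norm_eq_abs, smul_eq_mul] at hrem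
  norm_num [Nat.factorial] at hrem
  convert hrem using 3; ring

end CubicTaylor

theorem abs_spline_defect_le_of_cubic_approx {xm c xp ym y0 yp dm d0 dp a₂ a₃ L h : ℝ}
    (hm : xm < c) (hp : c < xp) (hmh : c - xm ≤ h) (hph : xp - c ≤ h)
    (hym : |ym - (y0 + d0 * (xm - c) + a₂ / 2 * (xm - c) ^ 2 + a₃ / 6 * (xm - c) ^ 3)|
      ≤ L * |xm - c| ^ 4 / 6)
    (hyp : |yp - (y0 + d0 * (xp - c) + a₂ / 2 * (xp - c) ^ 2 + a₃ / 6 * (xp - c) ^ 3)|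
      ≤ L * |xp - c| ^ 4 / 6)
    (hdm : |dm - (d0 + a₂ * (xm - c) + a₃ / 2 * (xm - c) ^ 2)| ≤ L * |xm - c| ^ 3 / 2)
    (hdp : |dp - (d0 + a₂ * (xp - c) + a₃ / 2 * (xp - c) ^ 2)| ≤ L * |xp - c| ^ 3 / 2) :
    |3 * ((xp - c) / (c - xm + (xp - c)) * ((y0 - ym) / (c - xm))
        + (c - xm) / (c - xm + (xp - c)) * ((yp - y0) / (xp - c)))
      - ((xp - c) / (c - xm + (xp - c)) * dm + 2 * d0
        + (c - xm) / (c - xm + (xp - c)) * dp)| ≤ L * h ^ 3 := by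
  obtain ⟨u, hu, rfl⟩ : ∃ u, 0 < u ∧ xm = c - u := ⟨c - xm, by linarith, by ring⟩
  obtain ⟨v, hv, rfl⟩ : ∃ v, 0 < v ∧ xp = c + v := ⟨xp - c, by linarith, by ring⟩
  simp only [sub_sub_cancel, add_sub_cancel_left, sub_sub_cancel_left, abs_neg,
    abs_of_pos hu, abs_of_pos hv] at *
  set Em := ym - (y0 + d0 * -u + a₂ / 2 * (-u) ^ 2 + a₃ / 6 * (-u) ^ 3)
  set Ep := yp - (y0 + d0 * v + a₂ / 2 * v ^ 2 + a₃ / 6 * v ^ 3)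
  set Fm := dm - (d0 + a₂ * -u + a₃ / 2 * (-u) ^ 2)
  set Fp := dp - (d0 + a₂ * v + a₃ / 2 * v ^ 2)
  have hL : 0 ≤ L := nonneg_of_mul_nonneg_left
    (by linarith [abs_nonneg Fm] : 0 ≤ L * u ^ 3) (by positivity)
  -- the defect vanishes on cubics, so only the Taylor remainders survive
  have hdefect : 3 * (v / (u + v) * ((y0 - ym) / u) + u / (u + v) * ((yp - y0) / v))
      - (v / (u + v) * dm + 2 * d0 + u / (u + v) * dp)
      = v / (u + v) * (-(3 / u) * Em - Fm) + u / (u + v) * (3 / v * Ep - Fp) := by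
    simp only [Em, Ep, Fm, Fp]
    field_simp
    ring
  have hleft : |-(3 / u) * Em - Fm| ≤ L * u ^ 3 :=
    calc |-(3 / u) * Em - Fm| ≤ 3 / u * |Em| + |Fm| := by
          refine (abs_sub _ _).trans_eq ?_
          rw [abs_mul, abs_neg, abs_of_pos (by positivity : 0 < 3 / u)]
      _ ≤ 3 / u * (L * u ^ 4 / 6) + L * u ^ 3 / 2 := by gcongr
      _ = L * u ^ 3 := by field_simp; ring
  have hright : |3 / v * Ep - Fp| ≤ L * v ^ 3 :=
    calc |3 / v * Ep - Fp| ≤ 3 / v * |Ep| + |Fp| := by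
          refine (abs_sub _ _).trans_eq ?_
          rw [abs_mul, abs_of_pos (by positivity : 0 < 3 / v)]
      _ ≤ 3 / v * (L * v ^ 4 / 6) + L * v ^ 3 / 2 := by gcongr
      _ = L * v ^ 3 := by field_simp; ring
  rw [hdefect]
  calc _ ≤ v / (u + v) * |-(3 / u) * Em - Fm| + u / (u + v) * |3 / v * Ep - Fp| := by
        refine (abs_add_le _ _).trans_eq ?_
        rw [abs_mul, abs_mul, abs_of_pos (by positivity : 0 < v / (u + v)),
          abs_of_pos (by positivity : 0 < u / (u + v))]
    _ ≤ v / (u + v) * (L * h ^ 3) + u / (u + v) * (L * h ^ 3) := by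
        gcongr
        exacts [hleft.trans (by gcongr), hright.trans (by gcongr)]
    _ = L * h ^ 3 := by field_simp; ring

theorem abs_le_of_abs_tridiag_le {n : ℕ} {e lam mu : ℕ → ℝ} {B : ℝ} (he₁ : e 1 = 0)
    (heₙ : e n = 0) (hlam : ∀ j, 2 ≤ j → j ≤ n - 1 → 0 ≤ lam j)
    (hmu : ∀ j, 2 ≤ j → j ≤ n - 1 → 0 ≤ mu j)
    (hsum : ∀ j, 2 ≤ j → j ≤ n - 1 → lam j + mu j ≤ 1)
    (hrow : ∀ j, 2 ≤ j → j ≤ n - 1 → |lam j * e (j - 1) + 2 * e j + mu j * e (j + 1)| ≤ B) :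
    ∀ i, 2 ≤ i → i ≤ n - 1 → |e i| ≤ B := by
  intro i hi hin
  have hB : 0 ≤ B := (abs_nonneg _).trans (hrow i hi hin)
  obtain ⟨j, hj, hmax⟩ := Finset.exists_max_image (Finset.Icc 1 n) (fun k => |e k|)
    ⟨i, Finset.mem_Icc.2 ⟨by omega, by omega⟩⟩
  have hle : ∀ k, 1 ≤ k → k ≤ n → |e k| ≤ |e j| := fun k h₁ h₂ =>
    hmax k (Finset.mem_Icc.2 ⟨h₁, h₂⟩)
  rw [Finset.mem_Icc] at hj
  refine (hle i (by omega) (by omega)).trans ?_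
  rcases (by omega : j = 1 ∨ j = n ∨ (2 ≤ j ∧ j ≤ n - 1)) with rfl | rfl | ⟨hj₂, hjn⟩
  · rwa [he₁, abs_zero]
  · rwa [heₙ, abs_zero]
  have hlj := hlam j hj₂ hjn
  have hmj := hmu j hj₂ hjn
  have hprev : lam j * |e (j - 1)| ≤ lam j * |e j| :=
    mul_le_mul_of_nonneg_left (hle _ (by omega) (by omega)) hlj
  have hnext : mu j * |e (j + 1)| ≤ mu j * |e j| :=
    mul_le_mul_of_nonneg_left (hle _ (by omega) (by omega)) hmj
  set r := lam j * e (j - 1) + 2 * e j + mu j * e (j + 1) with hr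
  have h2e : 2 * |e j| ≤ |r| + lam j * |e (j - 1)| + mu j * |e (j + 1)| := by
    have h₁ := abs_sub (r - lam j * e (j - 1)) (mu j * e (j + 1))
    have h₂ := abs_sub r (lam j * e (j - 1))
    rw [show r - lam j * e (j - 1) - mu j * e (j + 1) = 2 * e j by rw [hr]; ring,
      abs_mul, abs_two] at h₁
    rw [abs_mul, abs_of_nonneg hlj] at h₂
    rw [abs_mul, abs_of_nonneg hmj] at h₁
    linarith
  nlinarith [hsum j hj₂ hjn, hrow j hj₂ hjn, abs_nonneg (e j)]

section Mesh

variable {x : ℕ → ℝ} {i : ℕ}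

theorem lamb_nonneg (h₀ : 0 ≤ hstep x i) (h₁ : 0 ≤ hstep x (i + 1)) : 0 ≤ lamb x i :=
  div_nonneg h₁ (add_nonneg h₀ h₁)

theorem mub_nonneg (h₀ : 0 ≤ hstep x i) (h₁ : 0 ≤ hstep x (i + 1)) : 0 ≤ mub x i :=
  div_nonneg h₀ (add_nonneg h₀ h₁)

theorem lamb_add_mub (h : hstep x i + hstep x (i + 1) ≠ 0) : lamb x i + mub x i = 1 := by
  rw [lamb, mub, ← add_div, add_comm, div_self h]

variable {f : ℝ → ℝ} {j : ℕ}

theorem abs_spline_row_defect_le {a b L h : ℝ} (hj : 1 ≤ j)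
    (hf : ContDiffOn ℝ 4 f (Icc a b))
    (hL : ∀ t ∈ Icc a b, |iteratedDerivWithin 4 f (Icc a b) t| ≤ L)
    (ha : a ≤ x (j - 1)) (hb : x (j + 1) ≤ b) (h₀ : 0 < hstep x (j - 1)) (h₁ : 0 < hstep x j)
    (hh₀ : hstep x (j - 1) ≤ h) (hh₁ : hstep x j ≤ h) :
    |3 * (lamb x (j - 1) * mslope x f (j - 1) + mub x (j - 1) * mslope x f j)
      - (lamb x (j - 1) * derivWithin f (Icc a b) (x (j - 1))
        + 2 * derivWithin f (Icc a b) (x j)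
        + mub x (j - 1) * derivWithin f (Icc a b) (x (j + 1)))| ≤ L * h ^ 3 := by
  simp only [lamb, mub, mslope, hstep, Nat.sub_add_cancel hj] at *
  have hm : x (j - 1) ∈ Icc a b := ⟨ha, by linarith⟩
  have hc : x j ∈ Icc a b := ⟨by linarith, by linarith⟩
  have hp : x (j + 1) ∈ Icc a b := ⟨by linarith, hb⟩
  have hab : a < b := by linarith
  exact abs_spline_defect_le_of_cubic_approx (by linarith) (by linarith) hh₀ hh₁
    (abs_sub_cubic_taylor_le hab hf hL hc hm) (abs_sub_cubic_taylor_le hab hf hL hc hp)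
    (abs_sub_quadratic_taylor_derivWithin_le hab hf hL hc hm)
    (abs_sub_quadratic_taylor_derivWithin_le hab hf hL hc hp)

theorem deriv_deriv_hermite_eq_of_spline_row {d : ℕ → ℝ} (hj : 1 ≤ j)
    (h₀ : 0 < hstep x (j - 1)) (h₁ : 0 < hstep x j)
    (hrow : lamb x (j - 1) * d (j - 1) + 2 * d j + mub x (j - 1) * d (j + 1)
      = 3 * (lamb x (j - 1) * mslope x f (j - 1) + mub x (j - 1) * mslope x f j)) :
    deriv (deriv (hermite (x (j - 1)) (x j) (f (x (j - 1))) (f (x j)) (d (j - 1)) (d j))) (x j)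
      = deriv (deriv (hermite (x j) (x (j + 1)) (f (x j)) (f (x (j + 1))) (d j) (d (j + 1))))
          (x j) := by
  simp only [lamb, mub, mslope, hstep, Nat.sub_add_cancel hj] at hrow h₀ h₁
  rw [deriv_deriv_hermite_right (by linarith), deriv_deriv_hermite_left (by linarith),
    div_eq_div_iff h₀.ne' h₁.ne']
  generalize (f (x j) - f (x (j - 1))) / (x j - x (j - 1)) = m₀ at hrow ⊢
  generalize (f (x (j + 1)) - f (x j)) / (x (j + 1) - x j) = m₁ at hrow ⊢
  field_simp at hrow
  linear_combination 2 * hrow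

theorem abs_sub_derivWithin_le_of_spline_system {n : ℕ} {df : ℕ → ℝ} {L h : ℝ}
    (hx : ∀ i, 1 ≤ i → i ≤ n - 1 → x i < x (i + 1))
    (hf : ContDiffOn ℝ 4 f (Icc (x 1) (x n)))
    (hL : ∀ t ∈ Icc (x 1) (x n), |iteratedDerivWithin 4 f (Icc (x 1) (x n)) t| ≤ L)
    (hh : ∀ i, 1 ≤ i → i ≤ n - 1 → hstep x i ≤ h)
    (hdf₁ : df 1 = derivWithin f (Icc (x 1) (x n)) (x 1))
    (hdfₙ : df n = derivWithin f (Icc (x 1) (x n)) (x n))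
    (hsys : ∀ j, 2 ≤ j → j ≤ n - 1 →
      lamb x (j - 1) * df (j - 1) + 2 * df j + mub x (j - 1) * df (j + 1)
        = 3 * (lamb x (j - 1) * mslope x f (j - 1) + mub x (j - 1) * mslope x f j)) :
    ∀ i, 2 ≤ i → i ≤ n - 1 → |df i - derivWithin f (Icc (x 1) (x n)) (x i)| ≤ L * h ^ 3 := by
  have hstep_pos : ∀ i, 1 ≤ i → i + 1 ≤ n → 0 < hstep x i := fun i h₁ h₂ =>
    sub_pos.2 (hx i h₁ (by omega))
  have hmono : MonotoneOn x (Icc 1 n) := monotoneOn_of_le_succ ordConnected_Icc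
    fun i _ hi hi' => by
      rw [Order.succ_eq_add_one, mem_Icc] at *
      exact (hx i hi.1 (by omega)).le
  refine abs_le_of_abs_tridiag_le (lam := fun j => lamb x (j - 1))
    (mu := fun j => mub x (j - 1)) (by rw [hdf₁, sub_self]) (by rw [hdfₙ, sub_self])
    ?_ ?_ ?_ ?_ <;> intro j hj hjn
  · exact lamb_nonneg (hstep_pos _ (by omega) (by omega)).le
      (hstep_pos _ (by omega) (by omega)).le
  · exact mub_nonneg (hstep_pos _ (by omega) (by omega)).le
      (hstep_pos _ (by omega) (by omega)).le
  · exact (lamb_add_mub (add_pos (hstep_pos _ (by omega) (by omega))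
      (hstep_pos _ (by omega) (by omega))).ne').le
  · have hdefect := abs_spline_row_defect_le (j := j) (by omega) hf hL
      (hmono ⟨le_rfl, by omega⟩ ⟨by omega, by omega⟩ (by omega))
      (hmono ⟨by omega, by omega⟩ ⟨by omega, le_rfl⟩ (by omega))
      (hstep_pos _ (by omega) (by omega)) (hstep_pos _ (by omega) (by omega))
      (hh _ (by omega) (by omega)) (hh _ (by omega) (by omega))
    rw [← hsys j hj hjn] at hdefect
    convert hdefect using 2
    ring

end Mesh

theorem monotone_spline_max_order_general (n : ℕ) (x : ℕ → ℝ) (f : ℝ → ℝ)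
    (df dd : ℕ → ℝ) (L K T p hhat ftil : ℝ) (i0 : ℕ)
    (hx : ∀ i, 1 ≤ i → i ≤ n - 1 → x i < x (i + 1))
    (hf : ContDiffOn ℝ 4 f (Set.Icc (x 1) (x n)))
    (hLb : ∀ t ∈ Set.Icc (x 1) (x n),
      |iteratedDerivWithin 4 f (Set.Icc (x 1) (x n)) t| ≤ L)
    (hub : ∀ i, 1 ≤ i → i ≤ n - 1 → hstep x i ≤ hhat)
    (hK : 0 < K)
    (hdf1 : df 1 = derivWithin f (Set.Icc (x 1) (x n)) (x 1))
    (hdfn : df n = derivWithin f (Set.Icc (x 1) (x n)) (x n))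
    (hsys : ∀ j, 2 ≤ j → j ≤ n - 1 →
      lamb x (j - 1) * df (j - 1) + 2 * df j + mub x (j - 1) * df (j + 1)
        = 3 * (lamb x (j - 1) * mslope x f (j - 1) + mub x (j - 1) * mslope x f j))
    (hftil : |derivWithin f (Set.Icc (x 1) (x n)) (x i0) - ftil| ≤ T * hhat ^ p)
    (hdd : ∀ i, i ≠ i0 → dd i = df i) (hddi0 : dd i0 = ftil) :
    (|dd i0 - derivWithin f (Set.Icc (x 1) (x n)) (x i0)| ≤ T * hhat ^ p ∧
      ∀ i, 2 ≤ i → i ≤ n - 1 → i ≠ i0 →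
        |dd i - derivWithin f (Set.Icc (x 1) (x n)) (x i)|
          ≤ ((17 * K + K ^ 2) / 16 + 1) * L * hhat ^ 3) ∧
    (∀ j, 2 ≤ j → j ≤ n - 1 → j ≠ i0 - 1 → j ≠ i0 → j ≠ i0 + 1 →
      deriv (deriv (hermite (x (j - 1)) (x j) (f (x (j - 1))) (f (x j))
          (dd (j - 1)) (dd j))) (x j)
        = deriv (deriv (hermite (x j) (x (j + 1)) (f (x j)) (f (x (j + 1)))
            (dd j) (dd (j + 1)))) (x j)) := by
  have herr := abs_sub_derivWithin_le_of_spline_system hx hf hLb hub hdf1 hdfn hsys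
  refine ⟨⟨by rw [hddi0, abs_sub_comm]; exact hftil, fun i hi hin hne => ?_⟩,
    fun j hj hjn hne₁ hne hne₂ => ?_⟩
  · have h := herr i hi hin
    rw [hdd i hne, mul_assoc]
    exact h.trans (le_mul_of_one_le_left ((abs_nonneg _).trans h)
      (le_add_of_nonneg_left (by positivity)))
  · rw [hdd (j - 1) (by omega), hdd j hne, hdd (j + 1) (by omega)]
    exact deriv_deriv_hermite_eq_of_spline_row (by omega)
      (sub_pos.2 (hx _ (by omega) (by omega))) (sub_pos.2 (hx j (by omega) hjn)) (hsys j hj hjn)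

/-- Monotone spline with maximum order: replacing, at a single interior index
`i₀`, the spline-system derivative value by `f̃ᵢ₀` with
`|f'(xᵢ₀) − f̃ᵢ₀| ≤ T·ĥ^p` preserves (i) the accuracy of all the other
derivative values and (ii) `C²` matching of second derivatives of the two
adjacent cubic pieces at every interior knot `xⱼ`, `j ∉ {i₀−1, i₀, i₀+1}`. -/
theorem monotone_spline_max_order (n : ℕ) (x : ℕ → ℝ) (f : ℝ → ℝ)
    (df dd : ℕ → ℝ) (L K T p hhat ftil : ℝ) (i0 : ℕ) (hn : 3 ≤ n)
    (hx : ∀ i, 1 ≤ i → i ≤ n - 1 → x i < x (i + 1))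
    (hf : ContDiffOn ℝ 4 f (Set.Icc (x 1) (x n)))
    (hL : 0 < L)
    (hLb : ∀ t ∈ Set.Icc (x 1) (x n),
      |iteratedDerivWithin 4 f (Set.Icc (x 1) (x n)) t| ≤ L)
    (hub : ∀ i, 1 ≤ i → i ≤ n - 1 → hstep x i ≤ hhat)
    (hach : ∃ i, 1 ≤ i ∧ i ≤ n - 1 ∧ hhat = hstep x i)
    (hK : 0 < K)
    (hKb : ∀ j, 1 ≤ j → j ≤ n - 1 → hhat / hstep x j ≤ K)
    (hdf1 : df 1 = derivWithin f (Set.Icc (x 1) (x n)) (x 1))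
    (hdfn : df n = derivWithin f (Set.Icc (x 1) (x n)) (x n))
    (hsys : ∀ j, 2 ≤ j → j ≤ n - 1 →
      lamb x (j - 1) * df (j - 1) + 2 * df j + mub x (j - 1) * df (j + 1)
        = 3 * (lamb x (j - 1) * mslope x f (j - 1) + mub x (j - 1) * mslope x f j))
    (hi0 : 2 ≤ i0) (hi0n : i0 ≤ n - 1) (hT : 0 < T) (hp : 0 < p)
    (hftil : |derivWithin f (Set.Icc (x 1) (x n)) (x i0) - ftil| ≤ T * hhat ^ p)
    (hdd : ∀ i, i ≠ i0 → dd i = df i) (hddi0 : dd i0 = ftil) :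
    (|dd i0 - derivWithin f (Set.Icc (x 1) (x n)) (x i0)| ≤ T * hhat ^ p ∧
      ∀ i, 2 ≤ i → i ≤ n - 1 → i ≠ i0 →
        |dd i - derivWithin f (Set.Icc (x 1) (x n)) (x i)|
          ≤ ((17 * K + K ^ 2) / 16 + 1) * L * hhat ^ 3) ∧
    (∀ j, 2 ≤ j → j ≤ n - 1 → j ≠ i0 - 1 → j ≠ i0 → j ≠ i0 + 1 →
      deriv (deriv (hermite (x (j - 1)) (x j) (f (x (j - 1))) (f (x j))
          (dd (j - 1)) (dd j))) (x j)
        = deriv (deriv (hermite (x j) (x (j + 1)) (f (x j)) (f (x (j + 1)))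
            (dd j) (dd (j + 1)))) (x j)) :=
  monotone_spline_max_order_general n x f df dd L K T p hhat ftil i0 hx hf hLb hub hK hdf1 hdfn hsys
    hftil hdd hddi0
end
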